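/- arXiv:2409.04956 — 2 statements merged into one kernel-verified Lean document; each statement's English description precedes it below -/
import Mathlib

section
/- Let Γ act by isometries on the real line ℝ, and suppose some element x ∈ Γ acts by an orientation-reversing isometry. If the translation length function ℓ(γ) := inf_{p∈ℝ} |γ·p − p| satisfies ℓ(xy) = ℓ(y) for every y ∈ Γ, then every element of Γ acts either as the identity or as the same reflection as x; in particular ℓ is identically zero. -/
/-!
Every isometry of ℝ is a translation `p ↦ p + a`, of translation length `|a|`, or a reflection
`p ↦ b - p`, of translation length `0`, and composing with the reflection `x` swaps the two kinds.
So `ℓ(xγ) = ℓ(γ)` forces a translation `γ` to have `|a| = 0`, and for a reflection `γ` it makes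
the translation `xγ : p ↦ p + (c - b)` have length `0`, i.e. `b = c`.
-/

theorem Isometry.real_eq_add_or_eq_sub {f : ℝ → ℝ} (hf : Isometry f) :
    (∀ p, f p = p + f 0) ∨ (∀ p, f p = f 0 - p) := by
  have hsq : ∀ p q, (f p - f q) ^ 2 = (p - q) ^ 2 := fun p q => by
    rw [← sq_abs, ← Real.dist_eq, hf.dist_eq, Real.dist_eq, sq_abs]
  -- polarization of the three distances between `0`, `1` and `p`
  have hpol : ∀ p, (f p - f 0) * (f 1 - f 0) = p := fun p => by
    linear_combination (hsq p 0 + hsq 1 0 - hsq p 1) / 2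
  have h1 : |f 1 - f 0| = 1 := by
    rw [← Real.dist_eq, hf.dist_eq, Real.dist_eq]; norm_num
  rcases (abs_eq zero_le_one).mp h1 with h1 | h1
  · exact .inl fun p => by linarith [h1 ▸ hpol p]
  · exact .inr fun p => by linarith [h1 ▸ hpol p]

noncomputable def translationLength (f : ℝ → ℝ) : ℝ := ⨅ p, |f p - p|

theorem translationLength_eq_abs_of_forall_eq_add {f : ℝ → ℝ} {a : ℝ} (h : ∀ p, f p = p + a) :
    translationLength f = |a| := by
  simp [translationLength, h]

theorem translationLength_eq_zero_of_forall_eq_sub {f : ℝ → ℝ} {b : ℝ} (h : ∀ p, f p = b - p) :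
    translationLength f = 0 := by
  refine le_antisymm ?_ (Real.iInf_nonneg fun p => abs_nonneg _)
  calc translationLength f ≤ |f (b / 2) - b / 2| :=
        ciInf_le ⟨0, by rintro _ ⟨p, rfl⟩; exact abs_nonneg _⟩ _
    _ = 0 := by rw [h]; ring_nf; exact abs_zero

theorem eq_id_or_eq_sub_of_translationLength_sub_comp {f : ℝ → ℝ} (hf : Isometry f) {c : ℝ}
    (hc : translationLength (fun p => c - f p) = translationLength f) :
    (∀ p, f p = p) ∨ (∀ p, f p = c - p) := by
  rcases hf.real_eq_add_or_eq_sub with htr | href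
  · have hreflect : translationLength (fun p => c - f p) = 0 :=
      translationLength_eq_zero_of_forall_eq_sub (b := c - f 0) fun p => by rw [htr]; ring
    have ha : |f 0| = 0 := by
      rw [← translationLength_eq_abs_of_forall_eq_add htr, ← hc, hreflect]
    exact .inl fun p => by rw [htr, abs_eq_zero.mp ha, add_zero]
  · have htrans : translationLength (fun p => c - f p) = |c - f 0| :=
      translationLength_eq_abs_of_forall_eq_add fun p => by rw [href]; ring
    have hb : |c - f 0| = 0 := by
      rw [← htrans, hc, translationLength_eq_zero_of_forall_eq_sub href]
    exact .inr fun p => by rw [href, sub_eq_zero.mp (abs_eq_zero.mp hb)]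

theorem stmt2_general {Γ : Type*} [Group Γ] (ρ : Γ → ℝ → ℝ)
    (hiso : ∀ γ : Γ, Isometry (ρ γ))
    (hmul : ∀ (γ δ : Γ) (p : ℝ), ρ (γ * δ) p = ρ γ (ρ δ p))
    (x : Γ) (c : ℝ) (hx : ∀ p : ℝ, ρ x p = c - p)
    (ℓ : Γ → ℝ) (hℓ : ∀ γ : Γ, ℓ γ = ⨅ p : ℝ, |ρ γ p - p|)
    (h : ∀ y : Γ, ℓ (x * y) = ℓ y) :
    (∀ γ : Γ, (∀ p : ℝ, ρ γ p = p) ∨ (∀ p : ℝ, ρ γ p = c - p)) ∧ (∀ γ : Γ, ℓ γ = 0) := by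
  have hℓ' : ∀ γ, ℓ γ = translationLength (ρ γ) := hℓ
  have key : ∀ γ : Γ, (∀ p : ℝ, ρ γ p = p) ∨ (∀ p : ℝ, ρ γ p = c - p) := fun γ => by
    refine eq_id_or_eq_sub_of_translationLength_sub_comp (hiso γ) ?_
    rw [← hℓ', ← h γ, hℓ']
    simp only [funext (hmul x γ), hx]
  refine ⟨key, fun γ => ?_⟩
  rw [hℓ']
  rcases key γ with hid | href
  · simpa using translationLength_eq_abs_of_forall_eq_add (a := 0) (by simpa using hid)
  · exact translationLength_eq_zero_of_forall_eq_sub href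

/-- If Γ acts on ℝ by isometries, some `x ∈ Γ` acts by an orientation-reversing
isometry `p ↦ c - p`, and the translation length function `ℓ(γ) = ⨅ p, |γ·p - p|`
satisfies `ℓ(x y) = ℓ(y)` for all `y`, then every element of Γ acts as the identity
or as the same reflection as `x`; in particular ℓ vanishes identically. -/
theorem stmt2 {Γ : Type*} [Group Γ] (ρ : Γ → ℝ → ℝ)
    (hiso : ∀ γ : Γ, Isometry (ρ γ))
    (hone : ∀ p : ℝ, ρ 1 p = p)
    (hmul : ∀ (γ δ : Γ) (p : ℝ), ρ (γ * δ) p = ρ γ (ρ δ p))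
    (x : Γ) (c : ℝ) (hx : ∀ p : ℝ, ρ x p = c - p)
    (ℓ : Γ → ℝ) (hℓ : ∀ γ : Γ, ℓ γ = ⨅ p : ℝ, |ρ γ p - p|)
    (h : ∀ y : Γ, ℓ (x * y) = ℓ y) :
    (∀ γ : Γ, (∀ p : ℝ, ρ γ p = p) ∨ (∀ p : ℝ, ρ γ p = c - p)) ∧ (∀ γ : Γ, ℓ γ = 0) :=
  stmt2_general ρ hiso hmul x c hx ℓ hℓ h
end

section
/- Let v and w be smooth 1-forms on a connected open set U ⊆ ℝⁿ (or a Riemannian manifold), both closed and coclosed (dv = 0, d*v = 0, dw = 0, d*w = 0), with w nowhere vanishing, and suppose v = g·w for a smooth function g : U → ℝ. Then g is constant. -/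
open Set
open scoped RealInnerProductSpace

/-- If `v` and `w` are smooth closed and coclosed 1-forms (identified with vector fields)
on a connected open set `U ⊆ ℝⁿ`, `w` is nowhere vanishing on `U`, and `v = g • w` for a
smooth function `g`, then `g` is constant on `U`. -/
theorem stmt16 {d : ℕ} (U : Set (EuclideanSpace ℝ (Fin d)))
    (hUo : IsOpen U) (hUc : IsConnected U)
    (v w : EuclideanSpace ℝ (Fin d) → EuclideanSpace ℝ (Fin d))
    (g : EuclideanSpace ℝ (Fin d) → ℝ)
    (hv : ContDiffOn ℝ (⊤ : ℕ∞) v U) (hw : ContDiffOn ℝ (⊤ : ℕ∞) w U) (hg : ContDiffOn ℝ (⊤ : ℕ∞) g U)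
    (hvclosed : ∀ x ∈ U, ∀ a b : EuclideanSpace ℝ (Fin d),
      ⟪fderiv ℝ v x a, b⟫ = ⟪fderiv ℝ v x b, a⟫)
    (hwclosed : ∀ x ∈ U, ∀ a b : EuclideanSpace ℝ (Fin d),
      ⟪fderiv ℝ w x a, b⟫ = ⟪fderiv ℝ w x b, a⟫)
    (hvcoclosed : ∀ x ∈ U, ∑ i : Fin d,
      ⟪fderiv ℝ v x (EuclideanSpace.single i 1), EuclideanSpace.single i 1⟫ = (0:ℝ))
    (hwcoclosed : ∀ x ∈ U, ∑ i : Fin d,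
      ⟪fderiv ℝ w x (EuclideanSpace.single i 1), EuclideanSpace.single i 1⟫ = (0:ℝ))
    (hwne : ∀ x ∈ U, w x ≠ 0)
    (hvgw : ∀ x ∈ U, v x = g x • w x) :
    ∀ x ∈ U, ∀ y ∈ U, g x = g y := by
  -- `g` is differentiable at each point of `U` and its derivative vanishes
  have hdiff : ∀ x ∈ U, DifferentiableAt ℝ g x := fun x hx =>
    (hg.contDiffAt (hUo.mem_nhds hx)).differentiableAt (by simp)
  have key : ∀ x ∈ U, fderiv ℝ g x = 0 := by
    intro x hx
    have hUx : U ∈ nhds x := hUo.mem_nhds hx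
    have hgx : DifferentiableAt ℝ g x := hdiff x hx
    have hwx : DifferentiableAt ℝ w x :=
      (hw.contDiffAt hUx).differentiableAt (by simp)
    have hvw : v =ᶠ[nhds x] fun y => g y • w y :=
      Filter.eventuallyEq_of_mem hUx hvgw
    have hfd : fderiv ℝ v x = g x • fderiv ℝ w x + (fderiv ℝ g x).smulRight (w x) := by
      rw [hvw.fderiv_eq, fderiv_fun_smul hgx hwx]
    set dg := fderiv ℝ g x with hdg
    set Dw := fderiv ℝ w x with hDw
    -- Step A: antisymmetric part of closedness
    have stepA : ∀ a b : EuclideanSpace ℝ (Fin d),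
        dg a * ⟪w x, b⟫ = dg b * ⟪w x, a⟫ := by
      intro a b
      have h1 := hvclosed x hx a b
      have h2 := hwclosed x hx a b
      rw [hfd] at h1
      rw [← hDw] at h2
      simp only [ContinuousLinearMap.add_apply, ContinuousLinearMap.smul_apply,
        ContinuousLinearMap.smulRight_apply, inner_add_left, real_inner_smul_left] at h1
      rw [h2] at h1
      linarith
    -- Step B: coclosedness gives dg (w x) = 0
    have stepB : dg (w x) = 0 := by
      have h1 := hvcoclosed x hx
      have h2 := hwcoclosed x hx
      rw [← hDw] at h2
      rw [hfd] at h1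
      simp only [ContinuousLinearMap.add_apply, ContinuousLinearMap.smul_apply,
        ContinuousLinearMap.smulRight_apply, inner_add_left, real_inner_smul_left,
        Finset.sum_add_distrib, ← Finset.mul_sum, h2, mul_zero, zero_add] at h1
      have hsum : ∑ i : Fin d, dg (EuclideanSpace.single i 1)
          * ⟪w x, EuclideanSpace.single i 1⟫ = dg (w x) := by
        have hrepr := (EuclideanSpace.basisFun (Fin d) ℝ).toBasis.sum_repr (w x)
        simp only [OrthonormalBasis.coe_toBasis_repr_apply, EuclideanSpace.basisFun_repr,
          OrthonormalBasis.coe_toBasis, EuclideanSpace.basisFun_apply] at hrepr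
        calc ∑ i : Fin d, dg (EuclideanSpace.single i 1) * ⟪w x, EuclideanSpace.single i 1⟫
            = ∑ i : Fin d, dg (w x i • EuclideanSpace.single i 1) := by
              refine Finset.sum_congr rfl fun i _ => ?_
              rw [map_smul]
              have : ⟪w x, EuclideanSpace.single i (1:ℝ)⟫ = w x i := by
                rw [EuclideanSpace.inner_single_right]; simp
              rw [this, smul_eq_mul, mul_comm]
          _ = dg (∑ i : Fin d, w x i • EuclideanSpace.single i 1) := by rw [map_sum]
          _ = dg (w x) := by rw [hrepr]
      rw [hsum] at h1
      exact h1
    -- Step C: conclude dg = 0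
    ext a
    have hA := stepA a (w x)
    rw [stepB, zero_mul] at hA
    have hne : ⟪w x, w x⟫ ≠ (0:ℝ) := inner_self_ne_zero.mpr (hwne x hx)
    have : dg a = 0 := by
      rcases mul_eq_zero.mp hA with h | h
      · exact h
      · exact absurd h hne
    simpa using this
  -- local constancy + connectedness
  intro x hx y hy
  by_contra hne
  set S := {z ∈ U | g z = g x} with hS
  set T := {z ∈ U | g z ≠ g x} with hT
  have hSopen : IsOpen S := by
    rw [isOpen_iff_mem_nhds]
    rintro z ⟨hzU, hzg⟩
    obtain ⟨ε, hε, hball⟩ := Metric.isOpen_iff.mp hUo z hzU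
    have hconv : Convex ℝ (Metric.ball z ε) := convex_ball z ε
    have hconst : ∀ p ∈ Metric.ball z ε, g p = g z := by
      intro p hp
      refine hconv.is_const_of_fderivWithin_eq_zero
        (fun q hq => (hdiff q (hball hq)).differentiableWithinAt) ?_ hp
        (Metric.mem_ball_self hε)
      intro q hq
      rw [fderivWithin_of_isOpen Metric.isOpen_ball hq]
      exact key q (hball hq)
    exact Filter.mem_of_superset (Metric.ball_mem_nhds z hε)
      (fun p hp => ⟨hball hp, (hconst p hp).trans hzg⟩)
  have hTopen : IsOpen T := by
    have hcont : ContinuousOn g U := hg.continuousOn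
    have : T = U ∩ g ⁻¹' ({g x}ᶜ) := by
      ext z; simp [hT, Set.mem_setOf_eq, and_comm]
    rw [this]
    exact hcont.isOpen_inter_preimage hUo (isOpen_compl_singleton)
  have hcover : U ⊆ S ∪ T := fun z hz => by
    by_cases h : g z = g x
    · exact Or.inl ⟨hz, h⟩
    · exact Or.inr ⟨hz, h⟩
  have hSne : (U ∩ S).Nonempty := ⟨x, hx, hx, rfl⟩
  have hTne : (U ∩ T).Nonempty := ⟨y, hy, hy, fun h => hne h.symm⟩
  obtain ⟨z, _, ⟨_, hz1⟩, ⟨_, hz2⟩⟩ :=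
    hUc.isPreconnected S T hSopen hTopen hcover hSne hTne
  exact hz2 hz1
end
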